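/- Let n ≥ 1 and let T = (T_{ij})_{1≤i,j≤n} be an n×n operator matrix with all entries T_{ij} ∈ B_A(H), acting on the direct sum of n copies of H. Then w_𝔸(diag(T₁₁, T₂₂, …, T_{nn})) ≤ w_𝔸(T), where diag(T₁₁, …, T_{nn}) is the n×n diagonal operator matrix with the diagonal entries of T. -/

import Mathlib

/-
Flipping the signs of the coordinates of an `𝔸`-unit vector `x` by `ε ∈ {±1}ⁿ` keeps it an
`𝔸`-unit vector and multiplies the `(i, j)` term of `⟪T x, x⟫_𝔸` by `εᵢ εⱼ`. Averaging over all
`2ⁿ` sign patterns kills the off-diagonal terms and leaves `⟪diag (T₁₁, …, Tₙₙ) x, x⟫_𝔸`, which is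
therefore at most `w_𝔸(T)`.

For `w_𝔸(T)` to be a genuine supremum the entries must be `A`-bounded. By Douglas' lemma each
`Tᵢⱼ ∈ B_A(H)` has an operator `L` with `A L = Tᵢⱼ* A`; then `P = L Tᵢⱼ` has `A P` self-adjoint,
so `k ↦ ‖Pᵏ x‖_A` is log-convex and of at most geometric growth `‖P‖ᵏ`, whence
`‖P x‖_A ≤ ‖P‖ ‖x‖_A` and `‖Tᵢⱼ x‖_A² = ⟪P x, x⟫_A ≤ ‖P‖ ‖x‖_A²`.
-/

noncomputable section

open ContinuousLinearMap

/-- The semi-inner product induced by a positive operator `A`: `⟪x, y⟫_A = ⟪A x, y⟫`. -/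
def sInnerA {E : Type*} [NormedAddCommGroup E] [InnerProductSpace ℂ E]
    (A : E →L[ℂ] E) (x y : E) : ℂ :=
  inner ℂ (A x) y

/-- The seminorm induced by `A`: `‖x‖_A = √(re ⟪A x, x⟫)`. -/
def sNormA {E : Type*} [NormedAddCommGroup E] [InnerProductSpace ℂ E]
    (A : E →L[ℂ] E) (x : E) : ℝ :=
  Real.sqrt (sInnerA A x x).re

/-- The `A`-operator seminorm: `sup {‖T x‖_A : x ∈ closure (range A), ‖x‖_A = 1}`. -/
def opNormA {E : Type*} [NormedAddCommGroup E] [InnerProductSpace ℂ E]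
    (A T : E →L[ℂ] E) : ℝ :=
  sSup {r | ∃ x ∈ closure (Set.range A), sNormA A x = 1 ∧ r = sNormA A (T x)}

/-- The `A`-numerical radius: `sup {|⟪T x, x⟫_A| : ‖x‖_A = 1}`. -/
def wA {E : Type*} [NormedAddCommGroup E] [InnerProductSpace ℂ E]
    (A T : E →L[ℂ] E) : ℝ :=
  sSup {r | ∃ x, sNormA A x = 1 ∧ r = ‖sInnerA A (T x) x‖}

/-- The `A`-Crawford number: `inf {|⟪T x, x⟫_A| : ‖x‖_A = 1}`. -/
def cA {E : Type*} [NormedAddCommGroup E] [InnerProductSpace ℂ E]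
    (A T : E →L[ℂ] E) : ℝ :=
  sInf {r | ∃ x, sNormA A x = 1 ∧ r = ‖sInnerA A (T x) x‖}

/-- `T ∈ B_A(H)`, i.e. the range of `T* A` is contained in the range of `A`. -/
def memBA {E : Type*} [NormedAddCommGroup E] [InnerProductSpace ℂ E] [CompleteSpace E]
    (A T : E →L[ℂ] E) : Prop :=
  Set.range ((adjoint T) ∘L A) ⊆ Set.range A

/-- `S` is the distinguished `A`-adjoint `T^{#_A}` of `T`:
`A ∘ S = T* ∘ A` and `R(S) ⊆ closure (R(A))`. -/
def IsSharpA {E : Type*} [NormedAddCommGroup E] [InnerProductSpace ℂ E] [CompleteSpace E]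
    (A T S : E →L[ℂ] E) : Prop :=
  A ∘L S = (adjoint T) ∘L A ∧ Set.range S ⊆ closure (Set.range A)

/-- The `2 × 2` operator matrix `[[X, Y], [Z, W]]` acting blockwise on
the Hilbert space direct sum `H ⊕ H`. -/
def blk2 {H : Type*} [NormedAddCommGroup H] [InnerProductSpace ℂ H]
    (X Y Z W : H →L[ℂ] H) : WithLp 2 (H × H) →L[ℂ] WithLp 2 (H × H) :=
  ((WithLp.prodContinuousLinearEquiv 2 ℂ H H).symm : (H × H) →L[ℂ] WithLp 2 (H × H)) ∘L
    ((X ∘L ContinuousLinearMap.fst ℂ H H + Y ∘L ContinuousLinearMap.snd ℂ H H).prod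
      (Z ∘L ContinuousLinearMap.fst ℂ H H + W ∘L ContinuousLinearMap.snd ℂ H H)) ∘L
    ((WithLp.prodContinuousLinearEquiv 2 ℂ H H) : WithLp 2 (H × H) →L[ℂ] H × H)

/-- The `n × n` operator matrix acting blockwise on the Hilbert direct sum of `n` copies of `H`. -/
def blkn {H : Type*} [NormedAddCommGroup H] [InnerProductSpace ℂ H] (n : ℕ)
    (T : Fin n → Fin n → (H →L[ℂ] H)) :
    PiLp 2 (fun _ : Fin n => H) →L[ℂ] PiLp 2 (fun _ : Fin n => H) :=
  ((PiLp.continuousLinearEquiv 2 ℂ (fun _ : Fin n => H)).symm :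
      (Fin n → H) →L[ℂ] PiLp 2 (fun _ : Fin n => H)) ∘L
    (ContinuousLinearMap.pi fun i => ∑ j, (T i j) ∘L ContinuousLinearMap.proj j) ∘L
    ((PiLp.continuousLinearEquiv 2 ℂ (fun _ : Fin n => H)) :
      PiLp 2 (fun _ : Fin n => H) →L[ℂ] (Fin n → H))

/-- The `n × n` diagonal operator matrix `diag (D 0, …, D (n-1))`. -/
def diagn {H : Type*} [NormedAddCommGroup H] [InnerProductSpace ℂ H] (n : ℕ)
    (D : Fin n → (H →L[ℂ] H)) :
    PiLp 2 (fun _ : Fin n => H) →L[ℂ] PiLp 2 (fun _ : Fin n => H) :=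
  blkn n (fun i j => if i = j then D i else 0)

lemma le_of_forall_mul_pow_le_mul_pow {r M c C : ℝ} (hc : 0 < c) (hM : 0 ≤ M)
    (h : ∀ k : ℕ, c * r ^ k ≤ C * M ^ k) : r ≤ M := by
  by_contra! hMr
  rcases hM.eq_or_lt with rfl | hM
  · have := h 1
    simp only [pow_one, mul_zero] at this
    exact (mul_pos hc hMr).not_ge this
  · obtain ⟨k, hk⟩ := pow_unbounded_of_one_lt (C / c) ((one_lt_div hM).mpr hMr)
    rw [div_pow, lt_div_iff₀ (pow_pos hM k), div_mul_eq_mul_div, div_lt_iff₀ hc] at hk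
    linarith [h k]

/-- A log-convex nonnegative sequence has nondecreasing ratios `a (k + 1) / a k`, so it grows
at least geometrically with ratio `a 1 / a 0`. -/
lemma le_mul_of_sq_le_mul_of_le_mul_pow {a : ℕ → ℝ} {C M : ℝ} (ha : ∀ k, 0 ≤ a k)
    (hM : 0 ≤ M) (hconv : ∀ k, a (k + 1) ^ 2 ≤ a k * a (k + 2))
    (hbound : ∀ k, a k ≤ C * M ^ k) : a 1 ≤ M * a 0 := by
  rcases (ha 0).eq_or_lt with h0 | h0
  · have h1 : a 1 ^ 2 ≤ 0 := by simpa [← h0] using hconv 0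
    rw [← h0, mul_zero]
    exact pow_eq_zero_iff two_ne_zero |>.mp (le_antisymm h1 (sq_nonneg _)) |>.le
  set r := a 1 / a 0
  have hr : 0 ≤ r := div_nonneg (ha 1) (ha 0)
  have hratio : ∀ k, r * a k ≤ a (k + 1) := by
    intro k
    induction k with
    | zero => exact (div_mul_cancel₀ _ h0.ne').le
    | succ k ih =>
      rcases (ha k).eq_or_lt with hk | hk
      · have : a (k + 1) ^ 2 ≤ 0 := by simpa [← hk] using hconv k
        rw [pow_eq_zero_iff two_ne_zero |>.mp (le_antisymm this (sq_nonneg _)), mul_zero]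
        exact ha _
      · refine le_of_mul_le_mul_left ?_ hk
        calc a k * (r * a (k + 1)) = (r * a k) * a (k + 1) := by ring
          _ ≤ a (k + 1) * a (k + 1) := by gcongr; exact ha _
          _ = a (k + 1) ^ 2 := (sq _).symm
          _ ≤ a k * a (k + 1 + 1) := hconv k
  have hgeom : ∀ k, a 0 * r ^ k ≤ a k := by
    intro k
    induction k with
    | zero => simp
    | succ k ih =>
      calc a 0 * r ^ (k + 1) = r * (a 0 * r ^ k) := by ring
        _ ≤ r * a k := by gcongr
        _ ≤ a (k + 1) := hratio k
  have := le_of_forall_mul_pow_le_mul_pow h0 hM fun k => (hgeom k).trans (hbound k)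
  rwa [div_le_iff₀ h0] at this

section Douglas
variable {𝕜 E F G : Type*} [RCLike 𝕜] [NormedAddCommGroup E] [NormedSpace 𝕜 E]
  [NormedAddCommGroup F] [NormedSpace 𝕜 F] [CompleteSpace F]
  [NormedAddCommGroup G] [InnerProductSpace 𝕜 G] [CompleteSpace G]

/-- Douglas' lemma. The factor takes values in `(ker A)ᗮ`, on which `A` is injective, and is
bounded by the closed graph theorem. -/
theorem ContinuousLinearMap.exists_comp_eq_of_range_subset {A : G →L[𝕜] E} {S : F →L[𝕜] E}
    (h : Set.range S ⊆ Set.range A) : ∃ L : F →L[𝕜] G, A ∘L L = S := by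
  set K : Submodule 𝕜 G := (LinearMap.ker (A : G →ₗ[𝕜] E))ᗮ
  set AK : K →ₗ[𝕜] E := (A : G →ₗ[𝕜] E) ∘ₗ K.subtype
  have hinj : Function.Injective AK := by
    rw [← LinearMap.ker_eq_bot, LinearMap.ker_eq_bot']
    intro k hk
    have : (k : G) ∈ LinearMap.ker (A : G →ₗ[𝕜] E) ⊓ K := ⟨hk, k.2⟩
    rw [Submodule.inf_orthogonal_eq_bot, Submodule.mem_bot] at this
    exact Subtype.ext this
  have hS : ∀ f, S f ∈ LinearMap.range AK := by
    intro f
    obtain ⟨g, hg⟩ := h ⟨f, rfl⟩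
    obtain ⟨k, hk, p, hp, rfl⟩ := (LinearMap.ker (A : G →ₗ[𝕜] E)).exists_add_mem_mem_orthogonal g
    have hAk : A k = 0 := hk
    exact ⟨⟨p, hp⟩, by simpa [AK, hAk] using hg⟩
  set L₀ : F →ₗ[𝕜] G := K.subtype ∘ₗ (LinearEquiv.ofInjective AK hinj).symm.toLinearMap ∘ₗ
    (S : F →ₗ[𝕜] E).codRestrict _ hS
  have hL₀K : ∀ f, L₀ f ∈ K := fun f => Subtype.prop _
  have hAL₀ : ∀ f, A (L₀ f) = S f := fun f =>
    congrArg Subtype.val ((LinearEquiv.ofInjective AK hinj).apply_symm_apply ⟨S f, hS f⟩)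
  have hcont : Continuous L₀ := by
    refine L₀.continuous_of_seq_closed_graph fun u x y hu hL₀u => ?_
    have hyK : y ∈ K := (Submodule.isClosed_orthogonal _).mem_of_tendsto hL₀u
      (Filter.Eventually.of_forall fun n => hL₀K (u n))
    have hAy : A y = A (L₀ x) := by
      refine tendsto_nhds_unique ((A.continuous.tendsto y).comp hL₀u) ?_
      simpa [Function.comp_def, hAL₀] using (S.continuous.tendsto x).comp hu
    exact congrArg Subtype.val (hinj (a₁ := ⟨y, hyK⟩) (a₂ := ⟨L₀ x, hL₀K x⟩) hAy)
  exact ⟨⟨L₀, hcont⟩, ContinuousLinearMap.ext hAL₀⟩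

end Douglas

section SemiInner
variable {E : Type*} [NormedAddCommGroup E] [InnerProductSpace ℂ E]

lemma sNormA_nonneg (A : E →L[ℂ] E) (x : E) : 0 ≤ sNormA A x := Real.sqrt_nonneg _

variable [CompleteSpace E] {A : E →L[ℂ] E}

lemma sInnerA_eq_inner_sqrt (hA : A.IsPositive) (x y : E) :
    sInnerA A x y = inner ℂ (CFC.sqrt A x) (CFC.sqrt A y) := by
  rw [sInnerA, ← adjoint_inner_left, (CFC.sqrt_nonneg A).isSelfAdjoint.adjoint_eq, ← comp_apply,
    ← mul_def, CFC.sqrt_mul_sqrt_self A ((nonneg_iff_isPositive A).mpr hA)]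

lemma sNormA_eq_norm_sqrt (hA : A.IsPositive) (x : E) : sNormA A x = ‖CFC.sqrt A x‖ := by
  rw [sNormA, sInnerA_eq_inner_sqrt hA, inner_self_eq_norm_sq_to_K]
  norm_cast
  exact Real.sqrt_sq (norm_nonneg _)

lemma sNormA_sq (hA : A.IsPositive) (x : E) : sNormA A x ^ 2 = (sInnerA A x x).re := by
  rw [sNormA_eq_norm_sqrt hA, sInnerA_eq_inner_sqrt hA]
  exact (inner_self_eq_norm_sq (𝕜 := ℂ) _).symm

lemma norm_sInnerA_le (hA : A.IsPositive) (x y : E) :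
    ‖sInnerA A x y‖ ≤ sNormA A x * sNormA A y := by
  rw [sInnerA_eq_inner_sqrt hA, sNormA_eq_norm_sqrt hA, sNormA_eq_norm_sqrt hA]
  exact norm_inner_le_norm _ _

/-- Since `A P` is self-adjoint, `‖P ^ (k + 1) x‖_A ^ 2 = ⟪P ^ k x, P ^ (k + 2) x⟫_A`, so
`k ↦ ‖P ^ k x‖_A` is log-convex by Cauchy–Schwarz; it grows at most like `‖P‖ ^ k`. -/
lemma sNormA_apply_le_of_isSelfAdjoint_comp (hA : A.IsPositive) {P : E →L[ℂ] E}
    (hP : IsSelfAdjoint (A ∘L P)) (x : E) : sNormA A (P x) ≤ ‖P‖ * sNormA A x := by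
  set a : ℕ → ℝ := fun k => sNormA A ((P ^ k) x)
  have hpow_succ : ∀ k, (P ^ (k + 1)) x = P ((P ^ k) x) := fun k => by
    rw [pow_succ', mul_apply_eq_comp]
  have hconv : ∀ k, a (k + 1) ^ 2 ≤ a k * a (k + 2) := by
    intro k
    have hswap : sInnerA A ((P ^ (k + 1)) x) ((P ^ (k + 1)) x) =
        sInnerA A ((P ^ k) x) ((P ^ (k + 2)) x) := by
      rw [sInnerA, sInnerA, hpow_succ, hpow_succ, hpow_succ,
        hA.inner_left_eq_inner_right ((P ^ k) x)]
      exact hP.isSymmetric _ _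
    calc a (k + 1) ^ 2 = (sInnerA A ((P ^ k) x) ((P ^ (k + 2)) x)).re := by
          rw [sNormA_sq hA, hswap]
      _ ≤ ‖sInnerA A ((P ^ k) x) ((P ^ (k + 2)) x)‖ := Complex.re_le_norm _
      _ ≤ a k * a (k + 2) := norm_sInnerA_le hA _ _
  have hnorm_pow : ∀ k, ‖(P ^ k) x‖ ≤ ‖P‖ ^ k * ‖x‖ := by
    intro k
    induction k with
    | zero => simp
    | succ k ih =>
      rw [hpow_succ, pow_succ', mul_assoc]
      exact P.le_opNorm_of_le ih
  have hbound : ∀ k, a k ≤ ‖CFC.sqrt A‖ * ‖x‖ * ‖P‖ ^ k := fun k =>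
    calc a k = ‖CFC.sqrt A ((P ^ k) x)‖ := sNormA_eq_norm_sqrt hA _
      _ ≤ ‖CFC.sqrt A‖ * (‖P‖ ^ k * ‖x‖) := (CFC.sqrt A).le_opNorm_of_le (hnorm_pow k)
      _ = ‖CFC.sqrt A‖ * ‖x‖ * ‖P‖ ^ k := by ring
  simpa [a] using le_mul_of_sq_le_mul_of_le_mul_pow (a := a) (fun k => sNormA_nonneg A _)
    (norm_nonneg P) hconv hbound

lemma exists_sNormA_apply_le_of_memBA (hA : A.IsPositive) {T : E →L[ℂ] E} (hT : memBA A T) :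
    ∃ c, 0 ≤ c ∧ ∀ x, sNormA A (T x) ≤ c * sNormA A x := by
  obtain ⟨L, hL⟩ := ContinuousLinearMap.exists_comp_eq_of_range_subset hT
  have hP : IsSelfAdjoint (A ∘L (L ∘L T)) := by
    rw [← comp_assoc, hL, comp_assoc]
    exact hA.isSelfAdjoint.adjoint_conj T
  refine ⟨√‖L ∘L T‖, Real.sqrt_nonneg _, fun x => ?_⟩
  have hsq : sNormA A (T x) ^ 2 ≤ ‖L ∘L T‖ * sNormA A x ^ 2 :=
    calc sNormA A (T x) ^ 2 = (sInnerA A ((L ∘L T) x) x).re := by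
          rw [sNormA_sq hA, sInnerA, sInnerA, ← adjoint_inner_left, ← comp_apply, ← comp_apply,
            ← hL]
          rfl
      _ ≤ ‖sInnerA A ((L ∘L T) x) x‖ := Complex.re_le_norm _
      _ ≤ sNormA A ((L ∘L T) x) * sNormA A x := norm_sInnerA_le hA _ _
      _ ≤ ‖L ∘L T‖ * sNormA A x * sNormA A x := by
          gcongr
          · exact sNormA_nonneg A _
          · exact sNormA_apply_le_of_isSelfAdjoint_comp hA hP x
      _ = ‖L ∘L T‖ * sNormA A x ^ 2 := by ring
  calc sNormA A (T x) = √(sNormA A (T x) ^ 2) := (Real.sqrt_sq (sNormA_nonneg A _)).symm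
    _ ≤ √(‖L ∘L T‖ * sNormA A x ^ 2) := Real.sqrt_le_sqrt hsq
    _ = √‖L ∘L T‖ * sNormA A x := by
        rw [Real.sqrt_mul (norm_nonneg _), Real.sqrt_sq (sNormA_nonneg A _)]

end SemiInner

section Signs
variable {ι : Type*} [Fintype ι] [DecidableEq ι]

lemma sum_sign_mul_sign (i j : ι) :
    ∑ ε : ι → ℤˣ, ((ε i : ℤ) * ε j) = if i = j then 2 ^ Fintype.card ι else 0 := by
  split_ifs with hij
  · subst hij
    simp
  · have hflip : Function.Involutive fun ε : ι → ℤˣ => Function.update ε i (-ε i) :=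
      fun ε => by simp
    have hanti : ∑ ε : ι → ℤˣ, ((ε i : ℤ) * ε j) = -∑ ε : ι → ℤˣ, ((ε i : ℤ) * ε j) := by
      conv_lhs => rw [← Equiv.sum_comp (hflip.toPerm _)]
      simp [Function.update_of_ne (Ne.symm hij), ← Finset.sum_neg_distrib]
    omega

lemma sum_sign_mul_sign_mul {R : Type*} [CommRing R] (a : ι → ι → R) :
    ∑ ε : ι → ℤˣ, ∑ i, ∑ j, ((ε i : ℤ) * (ε j : ℤ) : R) * a i j =
      2 ^ Fintype.card ι * ∑ i, a i i := by
  calc ∑ ε : ι → ℤˣ, ∑ i, ∑ j, ((ε i : ℤ) * (ε j : ℤ) : R) * a i j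
      = ∑ i, ∑ j, ((∑ ε : ι → ℤˣ, (ε i : ℤ) * ε j : ℤ) : R) * a i j := by
        rw [Finset.sum_comm]
        refine Finset.sum_congr rfl fun i _ => ?_
        rw [Finset.sum_comm]
        push_cast
        simp only [Finset.sum_mul]
    _ = 2 ^ Fintype.card ι * ∑ i, a i i := by
        simp [sum_sign_mul_sign, Finset.mul_sum]

lemma norm_sum_diag_le_of_forall_signs {𝕜 : Type*} [RCLike 𝕜] {a : ι → ι → 𝕜} {w : ℝ}
    (h : ∀ ε : ι → ℤˣ, ‖∑ i, ∑ j, ((ε i : ℤ) * (ε j : ℤ) : 𝕜) * a i j‖ ≤ w) :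
    ‖∑ i, a i i‖ ≤ w := by
  have h2 : (0 : ℝ) < 2 ^ Fintype.card ι := by positivity
  refine le_of_mul_le_mul_left ?_ h2
  calc 2 ^ Fintype.card ι * ‖∑ i, a i i‖ = ‖(2 : 𝕜) ^ Fintype.card ι * ∑ i, a i i‖ := by
        rw [norm_mul, norm_pow, RCLike.norm_two]
    _ ≤ ∑ ε : ι → ℤˣ, ‖∑ i, ∑ j, ((ε i : ℤ) * (ε j : ℤ) : 𝕜) * a i j‖ := by
        rw [← sum_sign_mul_sign_mul]
        exact norm_sum_le _ _
    _ ≤ ∑ _ε : ι → ℤˣ, w := Finset.sum_le_sum fun ε _ => h ε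
    _ = 2 ^ Fintype.card ι * w := by simp

end Signs

section OperatorMatrix
variable {H : Type*} [NormedAddCommGroup H] [InnerProductSpace ℂ H] {n : ℕ}

lemma blkn_apply (T : Fin n → Fin n → (H →L[ℂ] H)) (x : PiLp 2 fun _ : Fin n => H) (i : Fin n) :
    blkn n T x i = ∑ j, T i j (x j) := by
  simp [blkn]

lemma diagn_apply (D : Fin n → (H →L[ℂ] H)) (x : PiLp 2 fun _ : Fin n => H) (i : Fin n) :
    diagn n D x i = D i (x i) := by
  rw [diagn, blkn_apply, Finset.sum_eq_single i] <;> simp_all [eq_comm]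

lemma sInnerA_diagn (A : H →L[ℂ] H) (u v : PiLp 2 fun _ : Fin n => H) :
    sInnerA (diagn n fun _ => A) u v = ∑ i, sInnerA A (u i) (v i) := by
  simp [sInnerA, PiLp.inner_apply, diagn_apply]

lemma sInnerA_diagn_blkn (A : H →L[ℂ] H) (T : Fin n → Fin n → (H →L[ℂ] H))
    (u v : PiLp 2 fun _ : Fin n => H) :
    sInnerA (diagn n fun _ => A) (blkn n T u) v = ∑ i, ∑ j, sInnerA A (T i j (u j)) (v i) := by
  rw [sInnerA_diagn]
  simp [blkn_apply, sInnerA]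

lemma sInnerA_diagn_blkn_smul (A : H →L[ℂ] H) (T : Fin n → Fin n → (H →L[ℂ] H))
    (c : Fin n → ℂ) (x : PiLp 2 fun _ : Fin n => H) :
    sInnerA (diagn n fun _ => A) (blkn n T (WithLp.toLp 2 fun i => c i • x i))
        (WithLp.toLp 2 fun i => c i • x i) =
      ∑ i, ∑ j, starRingEnd ℂ (c j) * c i * sInnerA A (T i j (x j)) (x i) := by
  rw [sInnerA_diagn_blkn]
  refine Finset.sum_congr rfl fun i _ => Finset.sum_congr rfl fun j _ => ?_
  simp only [sInnerA, map_smul, inner_smul_left, inner_smul_right]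
  ring

lemma sNormA_diagn_smul (A : H →L[ℂ] H) {c : Fin n → ℂ} (hc : ∀ i, ‖c i‖ = 1)
    (x : PiLp 2 fun _ : Fin n => H) :
    sNormA (diagn n fun _ => A) (WithLp.toLp 2 fun i => c i • x i) =
      sNormA (diagn n fun _ => A) x := by
  rw [sNormA, sNormA, sInnerA_diagn, sInnerA_diagn]
  congr 2
  refine Finset.sum_congr rfl fun i _ => ?_
  simp only [sInnerA, map_smul, inner_smul_left, inner_smul_right, ← mul_assoc, Complex.mul_conj',
    hc]
  simp

lemma sNormA_le_sNormA_diagn {A : H →L[ℂ] H} (hA : A.IsPositive) (y : PiLp 2 fun _ : Fin n => H)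
    (i : Fin n) : sNormA A (y i) ≤ sNormA (diagn n fun _ => A) y := by
  rw [sNormA, sNormA, sInnerA_diagn, Complex.re_sum]
  exact Real.sqrt_le_sqrt <|
    Finset.single_le_sum (fun j _ => hA.re_inner_nonneg_left (y j)) (Finset.mem_univ i)

end OperatorMatrix

section NumericalRadius
variable {E : Type*} [NormedAddCommGroup E] [InnerProductSpace ℂ E] {A T : E →L[ℂ] E}

lemma norm_sInnerA_le_wA {C : ℝ} (hC : ∀ x, sNormA A x = 1 → ‖sInnerA A (T x) x‖ ≤ C) {x : E}
    (hx : sNormA A x = 1) : ‖sInnerA A (T x) x‖ ≤ wA A T :=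
  le_csSup ⟨C, by rintro r ⟨y, hy, rfl⟩; exact hC y hy⟩ ⟨x, hx, rfl⟩

lemma wA_nonneg : 0 ≤ wA A T :=
  Real.sSup_nonneg (by rintro r ⟨x, -, rfl⟩; exact norm_nonneg _)

lemma wA_le {c : ℝ} (hc : 0 ≤ c) (h : ∀ x, sNormA A x = 1 → ‖sInnerA A (T x) x‖ ≤ c) :
    wA A T ≤ c :=
  Real.sSup_le (by rintro r ⟨x, hx, rfl⟩; exact h x hx) hc

end NumericalRadius

lemma exists_bound_norm_sInnerA_diagn_blkn {H : Type*} [NormedAddCommGroup H]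
    [InnerProductSpace ℂ H] [CompleteSpace H] {A : H →L[ℂ] H} (hA : A.IsPositive) {n : ℕ}
    {T : Fin n → Fin n → (H →L[ℂ] H)} (hT : ∀ i j, memBA A (T i j)) :
    ∃ C, ∀ x, sNormA (diagn n fun _ => A) x = 1 →
      ‖sInnerA (diagn n fun _ => A) (blkn n T x) x‖ ≤ C := by
  choose c hc0 hc using fun i j => exists_sNormA_apply_le_of_memBA hA (hT i j)
  refine ⟨∑ i, ∑ j, c i j, fun x hx => ?_⟩
  have hxi : ∀ i, sNormA A (x i) ≤ 1 := fun i => hx ▸ sNormA_le_sNormA_diagn hA x i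
  rw [sInnerA_diagn_blkn]
  refine (norm_sum_le _ _).trans <| Finset.sum_le_sum fun i _ =>
    (norm_sum_le _ _).trans <| Finset.sum_le_sum fun j _ => ?_
  calc ‖sInnerA A (T i j (x j)) (x i)‖ ≤ sNormA A (T i j (x j)) * sNormA A (x i) :=
        norm_sInnerA_le hA _ _
    _ ≤ (c i j * sNormA A (x j)) * 1 :=
        mul_le_mul (hc i j _) (hxi i) (sNormA_nonneg A _) (mul_nonneg (hc0 i j) (sNormA_nonneg A _))
    _ ≤ c i j := by simpa using mul_le_of_le_one_right (hc0 i j) (hxi j)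

theorem stmt17_general {H : Type*} [NormedAddCommGroup H] [InnerProductSpace ℂ H] [CompleteSpace H]
    (A : H →L[ℂ] H) (hA : A.IsPositive)
    (n : ℕ) (T : Fin n → Fin n → (H →L[ℂ] H))
    (hT : ∀ i j, memBA A (T i j)) :
    wA (diagn n fun _ => A) (diagn n fun i => T i i) ≤ wA (diagn n fun _ => A) (blkn n T) := by
  obtain ⟨C, hC⟩ := exists_bound_norm_sInnerA_diagn_blkn hA hT
  refine wA_le wA_nonneg fun x hx => ?_
  simp only [sInnerA_diagn, diagn_apply]
  refine norm_sum_diag_le_of_forall_signs (a := fun i j => sInnerA A (T i j (x j)) (x i))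
    fun ε => ?_
  have hε : ∀ i, ‖((ε i : ℤ) : ℂ)‖ = 1 := fun i => by
    rcases Int.units_eq_one_or (ε i) with h | h <;> simp [h]
  have hflip := norm_sInnerA_le_wA hC (x := WithLp.toLp 2 fun i => ((ε i : ℤ) : ℂ) • x i)
    (by rw [sNormA_diagn_smul A hε, hx])
  have hconj : ∀ i j, starRingEnd ℂ ((ε j : ℤ) : ℂ) * ((ε i : ℤ) : ℂ) = (ε i : ℤ) * (ε j : ℤ) :=
    fun i j => by rw [map_intCast, mul_comm]
  simpa only [sInnerA_diagn_blkn_smul, hconj] using hflip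

theorem stmt17 {H : Type*} [NormedAddCommGroup H] [InnerProductSpace ℂ H] [CompleteSpace H]
    (A : H →L[ℂ] H) (hA : A.IsPositive)
    (n : ℕ) (hn : 1 ≤ n) (T : Fin n → Fin n → (H →L[ℂ] H))
    (hT : ∀ i j, memBA A (T i j)) :
    wA (diagn n fun _ => A) (diagn n fun i => T i i) ≤ wA (diagn n fun _ => A) (blkn n T) :=
  stmt17_general A hA n T hT
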